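/- Under the Beta-binomial model with v = α + β = (1−ρ)/ρ fixed, the marginal probability that r_j = m (all m subjects in a cluster respond) is ∏_{i=0}^{m−1} (α + i)/(v + i), which is strictly increasing in ρ for fixed mean π ∈ (0,1) and m ≥ 2. -/
import Mathlib

open Finset

/-- Under the Beta-binomial model with v = α + β = (1−ρ)/ρ and mean π fixed (so α = πv),
the marginal probability that all m subjects in a cluster respond is
P(r_j = m) = E[π_j^m] = ∏_{i=0}^{m−1} (α + i)/(v + i), and this quantity is strictly
increasing in ρ on (0,1) for fixed π ∈ (0,1) and m ≥ 2. -/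
theorem stmt_19 (m : ℕ) (hm : 2 ≤ m) (π : ℝ) (hπ : π ∈ Set.Ioo (0 : ℝ) 1) :
    StrictMonoOn (fun ρ : ℝ =>
      ∏ i ∈ Finset.range m, (π * ((1 - ρ) / ρ) + i) / ((1 - ρ) / ρ + i))
      (Set.Ioo 0 1) := by
  obtain ⟨hπ0, hπ1⟩ := hπ
  rintro ρ₁ ⟨h1, h1'⟩ ρ₂ ⟨h2, h2'⟩ hlt
  set v₁ := (1 - ρ₁) / ρ₁ with hv1def
  set v₂ := (1 - ρ₂) / ρ₂ with hv2def
  have hv₁ : 0 < v₁ := div_pos (by linarith) h1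
  have hv₂ : 0 < v₂ := div_pos (by linarith) h2
  have hv : v₂ < v₁ := by
    rw [hv1def, hv2def, div_lt_div_iff₀ h2 h1]; nlinarith
  apply Finset.prod_lt_prod
  · intro i _
    apply div_pos
    · positivity
    · positivity
  · intro i _
    simp only [← hv1def, ← hv2def]
    rw [div_le_div_iff₀ (by positivity) (by positivity)]
    have : (0:ℝ) ≤ (i : ℝ) := Nat.cast_nonneg i
    nlinarith [mul_nonneg this (mul_nonneg (by linarith : (0:ℝ) ≤ 1 - π) (by linarith : (0:ℝ) ≤ v₁ - v₂))]
  · refine ⟨1, Finset.mem_range.mpr (by omega), ?_⟩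
    simp only [← hv1def, ← hv2def]
    rw [div_lt_div_iff₀ (by positivity) (by positivity)]
    push_cast
    nlinarith
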